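/- Let V be a finite set of n nodes and σ : Finset V → ℝ a monotone and submodular set function. Let r be a ranking of V and let r' be any ranking of V that orders V in decreasing order of M_r, i.e. M_r(v_{r'_1}) ≥ M_r(v_{r'_2}) ≥ ⋯ ≥ M_r(v_{r'_n}). Then for every k with 1 ≤ k ≤ n, the influence spread of the top-k nodes does not decrease: I_r(k) ≤ I_{r'}(k). -/
import Mathlib


open Finset

variable {V : Type*} [Fintype V] [DecidableEq V]

/-- The set of top-`k` nodes of ranking `r` (positions `1,…,k`, i.e. indices `< k`). -/
def topk {n : ℕ} (r : Fin n ≃ V) (k : ℕ) : Finset V :=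
  (Finset.univ.filter fun i : Fin n => (i : ℕ) < k).image r

/-- Ranking-based marginal influence spread `M_r(v) = σ(T_r(i)) − σ(T_r(i−1))`
where `i` is the (1-based) position of `v` in `r`. -/
noncomputable def margM {n : ℕ} (σ : Finset V → ℝ) (r : Fin n ≃ V) (v : V) : ℝ :=
  σ (topk r ((r.symm v : ℕ) + 1)) - σ (topk r (r.symm v))

/-- Influence spread of the top-`k` nodes: `I_r(k) = Σ_{i=1}^k M_r(v_{r_i})`. -/
noncomputable def inflI {n : ℕ} (σ : Finset V → ℝ) (r : Fin n ≃ V) (k : ℕ) : ℝ :=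
  ∑ i ∈ Finset.univ.filter (fun i : Fin n => (i : ℕ) < k), margM σ r (r i)

lemma mem_topk {n : ℕ} (r : Fin n ≃ V) (k : ℕ) (v : V) :
    v ∈ topk r k ↔ (r.symm v : ℕ) < k := by
  simp only [topk, mem_image, mem_filter, mem_univ, true_and]
  constructor
  · rintro ⟨i, hi, rfl⟩; simpa using hi
  · intro h; exact ⟨r.symm v, h, by simp⟩

lemma topk_zero {n : ℕ} (r : Fin n ≃ V) : topk r 0 = ∅ := by
  ext v; simp [mem_topk]

lemma topk_succ {n : ℕ} (r : Fin n ≃ V) (k : ℕ) (hk : k < n) :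
    topk r (k + 1) = insert (r ⟨k, hk⟩) (topk r k) := by
  ext v
  simp only [mem_topk, mem_insert]
  constructor
  · intro h
    rcases Nat.lt_succ_iff_lt_or_eq.mp h with h | h
    · exact Or.inr h
    · left
      have : r.symm v = ⟨k, hk⟩ := Fin.ext h
      rw [← this]; simp
  · rintro (rfl | h)
    · simp
    · omega

lemma topk_succ_of_le {n : ℕ} (r : Fin n ≃ V) (k : ℕ) (hk : n ≤ k) :
    topk r (k + 1) = topk r k := by
  ext v
  have := (r.symm v).isLt
  simp only [mem_topk]
  omega

lemma inflI_eq {n : ℕ} (σ : Finset V → ℝ) (r : Fin n ≃ V) (k : ℕ) :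
    inflI σ r k = σ (topk r k) - σ ∅ := by
  induction k with
  | zero => simp [inflI, topk_zero]
  | succ k ih =>
    by_cases hk : k < n
    · have hfil : (Finset.univ.filter fun i : Fin n => (i : ℕ) < k + 1)
          = insert ⟨k, hk⟩ (Finset.univ.filter fun i : Fin n => (i : ℕ) < k) := by
        ext i
        simp only [mem_filter, mem_univ, true_and, mem_insert, Fin.ext_iff]
        omega
      have hnot : (⟨k, hk⟩ : Fin n) ∉ (Finset.univ.filter fun i : Fin n => (i : ℕ) < k) := by
        simp
      have hmarg : margM σ r (r ⟨k, hk⟩) = σ (topk r (k + 1)) - σ (topk r k) := by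
        simp [margM]
      rw [inflI, hfil, Finset.sum_insert hnot, hmarg]
      have : (∑ i ∈ Finset.univ.filter (fun i : Fin n => (i : ℕ) < k), margM σ r (r i))
          = inflI σ r k := rfl
      rw [this, ih]
      ring
    · have hfil : (Finset.univ.filter fun i : Fin n => (i : ℕ) < k + 1)
          = (Finset.univ.filter fun i : Fin n => (i : ℕ) < k) := by
        ext i
        have := i.isLt
        simp only [mem_filter, mem_univ, true_and]
        omega
      rw [inflI, hfil, topk_succ_of_le r k (by omega)]
      exact ih

lemma sum_margM_le {n : ℕ} (σ : Finset V → ℝ)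
    (hsub : ∀ S T : Finset V, S ⊆ T → ∀ v ∉ T,
      σ (insert v T) - σ T ≤ σ (insert v S) - σ S)
    (r : Fin n ≃ V) :
    ∀ k : ℕ, ∀ S : Finset V, (∀ v ∈ S, (r.symm v : ℕ) < k) →
      σ ∅ + ∑ v ∈ S, margM σ r v ≤ σ S := by
  intro k
  induction k with
  | zero =>
    intro S hS
    have : S = ∅ := Finset.eq_empty_of_forall_notMem fun v hv => by
      have := hS v hv; omega
    simp [this]
  | succ k ih =>
    intro S hS
    by_cases hk : k < n
    · set w := r ⟨k, hk⟩ with hw_def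
      by_cases hw : w ∈ S
      · have hS' : ∀ v ∈ S.erase w, (r.symm v : ℕ) < k := by
          intro v hv
          obtain ⟨hne, hvS⟩ := Finset.mem_erase.mp hv
          have h1 := hS v hvS
          have h2 : (r.symm v : ℕ) ≠ k := by
            intro h
            apply hne
            have : r.symm v = ⟨k, hk⟩ := Fin.ext h
            rw [hw_def, ← this]; simp
          omega
        have h1 := ih (S.erase w) hS'
        have hwT : w ∉ topk r k := by simp [mem_topk, hw_def]
        have hsubT : S.erase w ⊆ topk r k := fun v hv => (mem_topk r k v).mpr (hS' v hv)
        have h2 := hsub (S.erase w) (topk r k) hsubT w hwT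
        have hmarg : margM σ r w = σ (insert w (topk r k)) - σ (topk r k) := by
          rw [margM, hw_def]
          simp [topk_succ r k hk]
        have hSins : S = insert w (S.erase w) := (Finset.insert_erase hw).symm
        have hwe : w ∉ S.erase w := Finset.notMem_erase w S
        calc σ ∅ + ∑ v ∈ S, margM σ r v
            = (σ ∅ + ∑ v ∈ S.erase w, margM σ r v) + margM σ r w := by
              conv_lhs => rw [hSins]
              rw [Finset.sum_insert hwe]; ring
          _ ≤ σ (S.erase w) + (σ (insert w (topk r k)) - σ (topk r k)) := by
              rw [hmarg]; exact add_le_add h1 le_rfl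
          _ ≤ σ (S.erase w) + (σ (insert w (S.erase w)) - σ (S.erase w)) := by
              exact add_le_add le_rfl h2
          _ = σ S := by rw [← hSins]; ring
      · apply ih S
        intro v hv
        have h1 := hS v hv
        have h2 : (r.symm v : ℕ) ≠ k := by
          intro h
          apply hw
          have : r.symm v = ⟨k, hk⟩ := Fin.ext h
          rw [hw_def, ← this]; simpa using hv
        omega
    · apply ih S
      intro v hv
      have := (r.symm v).isLt
      omega

lemma card_topk {n : ℕ} (r : Fin n ≃ V) (k : ℕ) (hk : k ≤ n) :
    (topk r k).card = k := by
  rw [topk, Finset.card_image_of_injective _ r.injective]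
  have : (Finset.univ.filter fun i : Fin n => (i : ℕ) < k)
      = Finset.map ⟨Fin.castLE hk, Fin.castLE_injective hk⟩ Finset.univ := by
    ext i
    simp only [mem_filter, mem_univ, true_and, Finset.mem_map, Function.Embedding.coeFn_mk]
    constructor
    · intro h
      exact ⟨⟨i, h⟩, by simp [Fin.ext_iff]⟩
    · rintro ⟨j, rfl⟩; simpa using j.isLt
  rw [this, Finset.card_map, Finset.card_univ, Fintype.card_fin]

/-- if `σ` is monotone and submodular and `r'` orders `V` in decreasing order
of `M_r`, then for every `k` with `1 ≤ k ≤ n`, `I_r(k) ≤ I_{r'}(k)`. -/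
theorem inflI_le_inflI_sorted {n : ℕ} (σ : Finset V → ℝ)
    (hmono : ∀ S T : Finset V, S ⊆ T → σ S ≤ σ T)
    (hsub : ∀ S T : Finset V, S ⊆ T → ∀ v ∉ T,
      σ (insert v T) - σ T ≤ σ (insert v S) - σ S)
    (r r' : Fin n ≃ V)
    (hr' : ∀ i j : Fin n, i ≤ j → margM σ r (r' j) ≤ margM σ r (r' i)) :
    ∀ k : ℕ, 1 ≤ k → k ≤ n → inflI σ r k ≤ inflI σ r' k := by
  intro k hk1 hk2
  set A := topk r k with hA
  set B := topk r' k with hB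
  set f := margM σ r with hf
  -- inflI σ r k = ∑ over A of f
  have hAeq : inflI σ r k = ∑ v ∈ A, f v := by
    rw [hA, topk, inflI, Finset.sum_image]
    intro x _ y _ h
    exact r.injective h
  -- sum over A ≤ sum over B
  have hkn : k - 1 < n := by omega
  set c := f (r' ⟨k - 1, hkn⟩) with hc
  have hub : ∀ u ∈ A \ B, f u ≤ c := by
    intro u hu
    obtain ⟨_, huB⟩ := Finset.mem_sdiff.mp hu
    have hpos : ¬ (r'.symm u : ℕ) < k := fun h => huB ((mem_topk r' k u).mpr h)
    have hle : (⟨k - 1, hkn⟩ : Fin n) ≤ r'.symm u := by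
      simp only [Fin.le_def]; omega
    have := hr' ⟨k - 1, hkn⟩ (r'.symm u) hle
    simpa [hf, hc] using this
  have hlb : ∀ v ∈ B \ A, c ≤ f v := by
    intro v hv
    obtain ⟨hvB, _⟩ := Finset.mem_sdiff.mp hv
    have hpos : (r'.symm v : ℕ) < k := (mem_topk r' k v).mp hvB
    have hle : r'.symm v ≤ (⟨k - 1, hkn⟩ : Fin n) := by
      simp only [Fin.le_def]; omega
    have := hr' (r'.symm v) ⟨k - 1, hkn⟩ hle
    simpa [hf, hc] using this
  have hcard : (A \ B).card = (B \ A).card := by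
    apply Finset.card_sdiff_comm
    rw [hA, hB, card_topk r k hk2, card_topk r' k hk2]
  have hsum : ∑ v ∈ A, f v ≤ ∑ v ∈ B, f v := by
    rw [← Finset.sum_inter_add_sum_sdiff A B f, ← Finset.sum_inter_add_sum_sdiff B A f,
      Finset.inter_comm B A]
    have h1 : ∑ v ∈ A \ B, f v ≤ (A \ B).card • c := Finset.sum_le_card_nsmul _ _ _ hub
    have h2 : (B \ A).card • c ≤ ∑ v ∈ B \ A, f v := Finset.card_nsmul_le_sum _ _ _ hlb
    rw [hcard] at h1
    linarith
  -- sum over B ≤ σ B - σ ∅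
  have hBle : σ ∅ + ∑ v ∈ B, f v ≤ σ B := by
    apply sum_margM_le σ hsub r n
    intro v _
    exact (r.symm v).isLt
  rw [hAeq, inflI_eq σ r' k, ← hB]
  linarith
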